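/- Let Z1 ~ N(μ1, 1) and Z2 ~ N(μ2, σ2²) be independent Gaussian random variables with σ2 > 0, let z0 ∈ ℝ, and set Z = Z1 Z2 + z0. Then for any f* ∈ ℝ, E[max(f* − Z, 0)] = ∫_{-∞}^{∞} φ(t − μ1) [ (f* − z0 − t μ2) Φ(u2(t)) + |t| σ2 φ(u2(t)) ] dt, where u2(t) = (f* − z0 − t μ2)/(|t| σ2) and φ, Φ are the standard normal pdf and cdf (the Nested Expected Improvement formula). -/

import Mathlib

open MeasureTheory ProbabilityTheory
open scoped NNReal ENNReal

/-- The standard normal probability density function `φ`. -/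
noncomputable def stdNormalPdf (u : ℝ) : ℝ :=
  (Real.sqrt (2 * Real.pi))⁻¹ * Real.exp (-u ^ 2 / 2)

/-- The standard normal cumulative distribution function `Φ`. -/
noncomputable def stdNormalCdf (u : ℝ) : ℝ :=
  ∫ s in Set.Iic u, stdNormalPdf s

/-! By independence, the expectation is an iterated integral against `N(μ1, 1) ⊗ N(μ2, σ2²)`.
For fixed `Z1 = t ≠ 0`, `t Z2` is Gaussian with standard deviation `|t| σ2`, and for `Y ~ N(m, s²)`
the expected improvement `E[max(a − Y, 0)] = (a − m) Φ((a − m)/s) + s φ((a − m)/s)` reduces by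
scaling to the standard normal case, where it follows from `φ'(u) = −u φ(u)`. The line `t = 0`,
where the formula divides by zero, is null for the outer integral. -/

open Real Set Filter Topology

lemma stdNormalPdf_eq_gaussianPDFReal : stdNormalPdf = gaussianPDFReal 0 1 := by
  ext u
  simp [stdNormalPdf, gaussianPDFReal, neg_div]

lemma hasDerivAt_stdNormalPdf (u : ℝ) : HasDerivAt stdNormalPdf (-u * stdNormalPdf u) u := by
  refine ((((hasDerivAt_pow 2 u).fun_neg.div_const 2).exp).const_mul
    (√(2 * π))⁻¹).congr_deriv ?_
  simp only [stdNormalPdf]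
  push_cast
  ring

lemma integrable_stdNormalPdf : Integrable stdNormalPdf := by
  rw [stdNormalPdf_eq_gaussianPDFReal]
  exact integrable_gaussianPDFReal 0 1

lemma integrable_mul_stdNormalPdf : Integrable fun u ↦ u * stdNormalPdf u := by
  refine ((integrable_mul_exp_neg_mul_sq (b := 1 / 2) one_half_pos).const_mul
    (√(2 * π))⁻¹).congr (ae_of_all _ fun u ↦ ?_)
  simp only [stdNormalPdf]
  ring_nf

lemma integral_Iic_mul_stdNormalPdf (c : ℝ) :
    ∫ u in Iic c, u * stdNormalPdf u = -stdNormalPdf c := by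
  have hlim : Tendsto stdNormalPdf atBot (𝓝 0) :=
    tendsto_zero_of_hasDerivAt_of_integrableOn_Iic (a := c)
      (fun u _ ↦ hasDerivAt_stdNormalPdf u)
      (by simpa only [neg_mul] using integrable_mul_stdNormalPdf.fun_neg.integrableOn)
      integrable_stdNormalPdf.integrableOn
  have h := integral_Iic_of_hasDerivAt_of_tendsto' (a := c) (f := fun u ↦ -stdNormalPdf u)
    (fun u _ ↦ by simpa only [neg_mul, neg_neg] using (hasDerivAt_stdNormalPdf u).fun_neg)
    integrable_mul_stdNormalPdf.integrableOn (by simpa using hlim.neg)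
  simpa using h

lemma integral_max_sub_zero_gaussianReal_zero_one (c : ℝ) :
    ∫ z, max (c - z) 0 ∂gaussianReal 0 1 = c * stdNormalCdf c + stdNormalPdf c := by
  have hind : (fun z ↦ gaussianPDFReal 0 1 z • max (c - z) 0)
      = (Iic c).indicator fun z ↦ c * stdNormalPdf z - z * stdNormalPdf z := by
    ext z
    rw [← stdNormalPdf_eq_gaussianPDFReal, smul_eq_mul]
    by_cases hz : z ≤ c
    · rw [indicator_of_mem (mem_Iic.mpr hz), max_eq_left (by linarith)]; ring
    · rw [indicator_of_notMem (notMem_Iic.mpr (not_le.mp hz)), max_eq_right (by linarith),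
        mul_zero]
  rw [integral_gaussianReal_eq_integral_smul one_ne_zero, hind,
    integral_indicator measurableSet_Iic, integral_sub (integrable_stdNormalPdf.const_mul c).integrableOn
      integrable_mul_stdNormalPdf.integrableOn,
    integral_const_mul, integral_Iic_mul_stdNormalPdf, stdNormalCdf, sub_neg_eq_add]

lemma integral_max_sub_zero_gaussianReal (a m : ℝ) {s : ℝ≥0} (hs : s ≠ 0) :
    ∫ y, max (a - y) 0 ∂gaussianReal m (s ^ 2)
      = (a - m) * stdNormalCdf ((a - m) / s) + s * stdNormalPdf ((a - m) / s) := by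
  have hs' : (0 : ℝ) < s := by positivity
  have hlaw : (gaussianReal 0 1).map (fun z ↦ s * z + m) = gaussianReal m (s ^ 2) := by
    rw [show (fun z : ℝ ↦ s * z + m) = (· + m) ∘ ((s : ℝ) * ·) from rfl,
      ← Measure.map_map (by fun_prop) (by fun_prop),
      gaussianReal_map_const_mul, gaussianReal_map_add_const]
    congr 1
    · simp
    · ext; simp
  have hscale (z : ℝ) : max (a - (s * z + m)) 0 = s * max ((a - m) / s - z) 0 := by
    rw [mul_max_of_nonneg _ _ hs'.le, mul_sub, mul_div_cancel₀ _ hs'.ne', mul_zero]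
    ring_nf
  rw [← hlaw, integral_map (by fun_prop) (by fun_prop)]
  simp only [hscale]
  rw [integral_const_mul, integral_max_sub_zero_gaussianReal_zero_one]
  field_simp

lemma integral_max_sub_mul_zero_gaussianReal (a t m : ℝ) {σ : ℝ≥0} (hσ : σ ≠ 0) (ht : t ≠ 0) :
    ∫ y, max (a - t * y) 0 ∂gaussianReal m (σ ^ 2)
      = (a - t * m) * stdNormalCdf ((a - t * m) / (|t| * σ))
        + |t| * σ * stdNormalPdf ((a - t * m) / (|t| * σ)) := by
  have hlaw : (gaussianReal m (σ ^ 2)).map (t * ·) = gaussianReal (t * m) ((‖t‖₊ * σ) ^ 2) := by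
    rw [gaussianReal_map_const_mul]
    congr 1
    ext
    simp [mul_pow]
  rw [← integral_map (φ := (t * ·)) (f := fun y ↦ max (a - y) 0) (by fun_prop) (by fun_prop), hlaw,
    integral_max_sub_zero_gaussianReal _ _ (mul_ne_zero (nnnorm_ne_zero_iff.mpr ht) hσ)]
  simp

lemma integrable_max_sub_mul_prod {μ ν : Measure ℝ} [IsFiniteMeasure μ] [IsFiniteMeasure ν]
    (hμ : Integrable id μ) (hν : Integrable id ν) (a : ℝ) :
    Integrable (fun p : ℝ × ℝ ↦ max (a - p.1 * p.2) 0) (μ.prod ν) :=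
  ((integrable_const a).sub (hμ.mul_prod hν)).pos_part

/-- The Nested Expected Improvement formula: for independent `Z1 ~ N(μ1, 1)` and
`Z2 ~ N(μ2, σ2²)` with `σ2 > 0`, `z0, f* ∈ ℝ`, and `Z = Z1 Z2 + z0`,
`E[max(f* − Z, 0)] = ∫ φ(t−μ1) [ (f*−z0−tμ2) Φ(u2 t) + |t| σ2 φ(u2 t) ] dt`
where `u2 t = (f*−z0−tμ2)/(|t| σ2)`. -/
theorem nested_expected_improvement
    {Ω : Type*} [MeasureSpace Ω] [IsProbabilityMeasure (ℙ : Measure Ω)]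
    (Z1 Z2 : Ω → ℝ) (μ1 μ2 : ℝ) (σ2 : ℝ≥0) (hσ2 : 0 < σ2) (z0 fstar : ℝ)
    (hZ1 : Measurable Z1) (hZ2 : Measurable Z2)
    (hlaw1 : Measure.map Z1 ℙ = gaussianReal μ1 1)
    (hlaw2 : Measure.map Z2 ℙ = gaussianReal μ2 (σ2 ^ 2))
    (hindep : IndepFun Z1 Z2 ℙ) :
    ∫ ω, max (fstar - (Z1 ω * Z2 ω + z0)) 0 ∂ℙ
      = ∫ t : ℝ, stdNormalPdf (t - μ1) *
          ((fstar - z0 - t * μ2) * stdNormalCdf ((fstar - z0 - t * μ2) / (|t| * (σ2 : ℝ)))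
            + |t| * (σ2 : ℝ) * stdNormalPdf ((fstar - z0 - t * μ2) / (|t| * (σ2 : ℝ)))) := by
  have hjoint : Measure.map (fun ω ↦ (Z1 ω, Z2 ω)) ℙ
      = (gaussianReal μ1 1).prod (gaussianReal μ2 (σ2 ^ 2)) := by
    rw [← hlaw1, ← hlaw2]
    exact (indepFun_iff_map_prod_eq_prod_map_map hZ1.aemeasurable hZ2.aemeasurable).mp hindep
  have hmean (m : ℝ) (v : ℝ≥0) : Integrable id (gaussianReal m v) :=
    (memLp_id_gaussianReal 1).integrable le_rfl
  have hZ : ∀ ω, fstar - (Z1 ω * Z2 ω + z0) = fstar - z0 - Z1 ω * Z2 ω := fun ω ↦ by ring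
  simp only [hZ]
  rw [← integral_map (f := fun p : ℝ × ℝ ↦ max (fstar - z0 - p.1 * p.2) 0)
      (hZ1.prodMk hZ2).aemeasurable (by fun_prop), hjoint,
    integral_prod _ (integrable_max_sub_mul_prod (hmean _ _) (hmean _ _) _),
    integral_gaussianReal_eq_integral_smul one_ne_zero]
  refine integral_congr_ae ?_
  filter_upwards [compl_mem_ae_iff.mpr (measure_singleton (0 : ℝ))] with t ht
  rw [integral_max_sub_mul_zero_gaussianReal _ _ _ hσ2.ne' ht, smul_eq_mul,
    stdNormalPdf_eq_gaussianPDFReal, gaussianPDFReal_sub, zero_add]
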